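/- arXiv:1712.00045 — 3 statements merged into one kernel-verified Lean document; each statement's English description precedes it below -/
import Mathlib

section
/- Let R = k[x^{ℚ≥0}] and I ⊂ R the ideal spanned by {x^q : q > 0}. Then I is a flat R-module. -/
open scoped NNRat

/-- The ideal `I ⊆ k[x^{ℚ≥0}]` spanned by the monomials `x^q` with `q > 0`. -/
noncomputable def posIdeal (k : Type) [Field k] : Ideal (AddMonoidAlgebra k ℚ≥0) :=
  Ideal.span {f | ∃ q : ℚ≥0, 0 < q ∧ f = AddMonoidAlgebra.single q (1 : k)}

/-- Every element of `posIdeal` is divisible by some monomial `x^p` with `p > 0`. -/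
lemma posIdeal.exists_dvd {k : Type} [Field k] {f : AddMonoidAlgebra k ℚ≥0}
    (hf : f ∈ posIdeal k) :
    ∃ p : ℚ≥0, 0 < p ∧ ∃ g, f = AddMonoidAlgebra.single p (1 : k) * g := by
  refine Submodule.span_induction ?_ ?_ ?_ ?_ hf
  · rintro x ⟨q, hq, rfl⟩
    exact ⟨q, hq, 1, (mul_one _).symm⟩
  · exact ⟨1, one_pos, 0, (mul_zero _).symm⟩
  · rintro x y - - ⟨p, hp, g, rfl⟩ ⟨p', hp', g', rfl⟩
    refine ⟨min p p', lt_min hp hp', AddMonoidAlgebra.single (p - min p p') 1 * g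
      + AddMonoidAlgebra.single (p' - min p p') 1 * g', ?_⟩
    rw [mul_add, ← mul_assoc, ← mul_assoc, AddMonoidAlgebra.single_mul_single,
      AddMonoidAlgebra.single_mul_single, one_mul, add_tsub_cancel_of_le (min_le_left _ _),
      add_tsub_cancel_of_le (min_le_right _ _)]
  · rintro r x - ⟨p, hp, g, rfl⟩
    exact ⟨p, hp, r * g, by rw [smul_eq_mul]; ring⟩

/-- Divisibility passes down to smaller positive exponents. -/
lemma posIdeal.dvd_of_le {k : Type} [Field k] {f g : AddMonoidAlgebra k ℚ≥0} {p q : ℚ≥0}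
    (h : f = AddMonoidAlgebra.single p (1 : k) * g) (hqp : q ≤ p) :
    f = AddMonoidAlgebra.single q (1 : k) * (AddMonoidAlgebra.single (p - q) 1 * g) := by
  rw [h, ← mul_assoc, AddMonoidAlgebra.single_mul_single, one_mul, add_tsub_cancel_of_le hqp]

/-- In the monoid algebra `R = k[x^{ℚ≥0}]` over a field `k`, the ideal
`I` spanned by the `x^q` with `q > 0` is a flat `R`-module. -/
theorem posIdeal_flat (k : Type) [Field k] :
    Module.Flat (AddMonoidAlgebra k ℚ≥0) (posIdeal k) := by
  set R := AddMonoidAlgebra k ℚ≥0 with hR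
  apply Module.Flat.of_forall_isTrivialRelation
  intro ι f x hrel
  cases isEmpty_or_nonempty (Fin ι) with
  | inl h =>
    exact ⟨0, fun i _ => 0, fun j => 0,
      fun i => (h.false i).elim, fun j => j.elim0⟩
  | inr h =>
    have hdvd : ∀ i, ∃ p : ℚ≥0, 0 < p ∧ ∃ g, (x i : R) = AddMonoidAlgebra.single p (1 : k) * g :=
      fun i => posIdeal.exists_dvd (x i).2
    choose p hp g hg using hdvd
    have hne : (Finset.univ : Finset (Fin ι)).Nonempty := Finset.univ_nonempty
    set q : ℚ≥0 := Finset.univ.inf' hne p with hq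
    have hq0 : 0 < q := (Finset.lt_inf'_iff hne).mpr fun i _ => hp i
    set y : Fin ι → R := fun i => AddMonoidAlgebra.single (p i - q) 1 * g i with hy
    have hxy : ∀ i, (x i : R) = AddMonoidAlgebra.single q (1 : k) * y i :=
      fun i => posIdeal.dvd_of_le (hg i) (Finset.inf'_le p (Finset.mem_univ i))
    -- coerce the relation to R
    have hrelR : ∑ i, f i • (x i : R) = 0 := by
      have := congrArg (Submodule.subtype (posIdeal k)) hrel
      simpa using this
    have hmono_ne : AddMonoidAlgebra.single q (1 : k) ≠ 0 := by
      simp [AddMonoidAlgebra.single_eq_zero]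
    have hsum : ∑ i, f i • y i = 0 := by
      have : AddMonoidAlgebra.single q (1 : k) * ∑ i, f i • y i = 0 := by
        rw [Finset.mul_sum]
        rw [show (0 : R) = ∑ i, f i • (x i : R) from hrelR.symm]
        refine Finset.sum_congr rfl fun i _ => ?_
        rw [hxy i, smul_eq_mul, smul_eq_mul]; ring
      exact (mul_eq_zero.mp this).resolve_left hmono_ne
    refine ⟨1, fun i _ => y i,
      fun _ => ⟨AddMonoidAlgebra.single q (1 : k),
        Ideal.subset_span ⟨q, hq0, rfl⟩⟩, fun i => ?_, fun _ => ?_⟩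
    · ext
      push_cast
      rw [hxy i, Finset.sum_const, Finset.card_univ]
      simp [mul_comm]
    · simpa [mul_comm] using hsum
end

section
/- Let R be a commutative ring and I ⊂ R an idempotent ideal that is flat as an R-module. Then the full subcategory of R-modules F with I ⊗_R F = 0 ('almost zero modules') is a Serre subcategory of the category of R-modules: it is closed under subobjects, quotients, and extensions. -/
open TensorProduct

/-- An `R`-module `F` is *almost zero* (with respect to an ideal `I`) if `I ⊗_R F = 0`. -/
def AlmostZero (R : Type) [CommRing R] (I : Ideal R)
    (F : Type) [AddCommGroup F] [Module R F] : Prop :=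
  Subsingleton (I ⊗[R] F)

/-- Let `R` be a commutative ring and `I ⊆ R` an idempotent ideal that
is flat as an `R`-module.  Then the almost zero modules form a Serre subcategory of the
category of `R`-modules: they are closed under submodules, quotients, and extensions. -/
theorem almostZero_serre (R : Type) [CommRing R] (I : Ideal R)
    (hidem : I * I = I) (hflat : Module.Flat R I) :
    -- closed under subobjects
    (∀ (M : Type) [AddCommGroup M] [Module R M] (N : Submodule R M),
        AlmostZero R I M → AlmostZero R I N) ∧
    -- closed under quotient objects
    (∀ (M : Type) [AddCommGroup M] [Module R M] (N : Submodule R M),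
        AlmostZero R I M → AlmostZero R I (M ⧸ N)) ∧
    -- closed under extensions
    (∀ (A B C : Type) [AddCommGroup A] [Module R A] [AddCommGroup B] [Module R B]
        [AddCommGroup C] [Module R C] (f : A →ₗ[R] B) (g : B →ₗ[R] C),
        Function.Injective f → Function.Surjective g → Function.Exact f g →
        AlmostZero R I A → AlmostZero R I C → AlmostZero R I B) := by
  refine ⟨?_, ?_, ?_⟩
  · intro M _ _ N hM
    haveI : Subsingleton (I ⊗[R] M) := hM
    have hinj : Function.Injective (LinearMap.lTensor I N.subtype) :=
      Module.Flat.lTensor_preserves_injective_linearMap N.subtype N.injective_subtype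
    exact ⟨fun x y => hinj (Subsingleton.elim _ _)⟩
  · intro M _ _ N hM
    haveI : Subsingleton (I ⊗[R] M) := hM
    have hsurj : Function.Surjective (LinearMap.lTensor I N.mkQ) :=
      LinearMap.lTensor_surjective I (Submodule.mkQ_surjective N)
    exact ⟨fun x y => by
      obtain ⟨a, rfl⟩ := hsurj x
      obtain ⟨b, rfl⟩ := hsurj y
      exact congrArg _ (Subsingleton.elim a b)⟩
  · intro A B C _ _ _ _ _ _ f g hf hg hexact hA hC
    haveI : Subsingleton (I ⊗[R] A) := hA
    haveI : Subsingleton (I ⊗[R] C) := hC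
    have hex : Function.Exact (LinearMap.lTensor I f) (LinearMap.lTensor I g) :=
      lTensor_exact I hexact hg
    refine subsingleton_of_forall_eq 0 fun x => ?_
    have hx : LinearMap.lTensor I g x = 0 := Subsingleton.elim _ _
    obtain ⟨a, rfl⟩ := (hex x).mp hx
    rw [Subsingleton.elim a 0, map_zero]
end

section
/- Let R = k[x^{ℚ≥0}] (monoid algebra of nonnegative rationals over a field k of characteristic zero), and Ω¹ = Ω¹_{R/k}. Then the map d log x : I → I ⊗_R Ω¹ defined on basis elements by x^q ↦ (1/q)·d(x^q) for q > 0 is a well-defined injective R-module homomorphism, where I is the ideal spanned by {x^q : q > 0}. -/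
open scoped NNRat
open TensorProduct

/-- The multiplication map `I ⊗_R Ω¹ → Ω¹`, `a ⊗ ω ↦ a • ω`. -/
noncomputable def muOmega (k : Type) [Field k] :
    (posIdeal k) ⊗[AddMonoidAlgebra k ℚ≥0]
        (KaehlerDifferential k (AddMonoidAlgebra k ℚ≥0))
      →ₗ[AddMonoidAlgebra k ℚ≥0]
        KaehlerDifferential k (AddMonoidAlgebra k ℚ≥0) :=
  TensorProduct.lift ((LinearMap.lsmul (AddMonoidAlgebra k ℚ≥0)
    (KaehlerDifferential k (AddMonoidAlgebra k ℚ≥0))).comp (posIdeal k).subtype)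

noncomputable section Dlog
variable (k : Type) [Field k] [CharZero k]

abbrev Rk : Type := AddMonoidAlgebra k ℚ≥0
abbrev Ωk : Type := KaehlerDifferential k (Rk k)

def Xm (q : ℚ≥0) : Rk k := AddMonoidAlgebra.single q 1

lemma Xm_mem {q : ℚ≥0} (hq : 0 < q) : Xm k q ∈ posIdeal k :=
  Ideal.subset_span ⟨q, hq, rfl⟩

def XI (q : ℚ≥0) (hq : 0 < q) : posIdeal k := ⟨Xm k q, Xm_mem k hq⟩

lemma Xm_mul (q q' : ℚ≥0) : Xm k q * Xm k q' = Xm k (q + q') := by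
  simp [Xm, AddMonoidAlgebra.single_mul_single]

lemma Xm_zero : Xm k 0 = 1 := rfl

/-- `ee q = q • x^q` as an element of the ideal. -/
def ee (q : ℚ≥0) : posIdeal k :=
  if h : 0 < q then ((q : ℚ) : k) • XI k q h else 0

def DcLin : Rk k →ₗ[k] posIdeal k :=
  (Finsupp.lsum k fun q => LinearMap.toSpanSingleton k _ (ee k q)) ∘ₗ
    (AddMonoidAlgebra.coeffLinearEquiv k).toLinearMap

lemma DcLin_single (q : ℚ≥0) (c : k) :
    DcLin k (AddMonoidAlgebra.single q c) = c • ee k q :=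
  (Finsupp.lsum_single k (fun q => LinearMap.toSpanSingleton k _ (ee k q)) q c).trans
    (LinearMap.toSpanSingleton_apply k _ _ c)

lemma DcLin_Xm (q : ℚ≥0) : DcLin k (Xm k q) = ee k q := by
  rw [Xm, DcLin_single, one_smul]

lemma ee_add (q q' : ℚ≥0) :
    ee k (q + q') = Xm k q • ee k q' + Xm k q' • ee k q := by
  have h0 : ee k 0 = 0 := by simp [ee]
  rcases eq_zero_or_pos q with rfl | hq
  · rw [zero_add, Xm_zero, one_smul, h0, smul_zero, add_zero]
  rcases eq_zero_or_pos q' with rfl | hq'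
  · rw [add_zero, Xm_zero, one_smul, h0, smul_zero, zero_add]
  have hqq' : 0 < q + q' := add_pos hq hq'
  apply Subtype.ext
  simp only [ee, dif_pos hq, dif_pos hq', dif_pos hqq', Submodule.coe_add,
    SetLike.val_smul, SetLike.val_smul_of_tower, smul_eq_mul, XI]
  rw [mul_smul_comm, mul_smul_comm, Xm_mul, Xm_mul, add_comm q' q, ← add_smul]
  congr 1
  push_cast
  ring

def Dc : Derivation k (Rk k) (posIdeal k) where
  toLinearMap := DcLin k
  map_one_eq_zero' := by
    have h1 : (1 : Rk k) = AddMonoidAlgebra.single 0 1 := rfl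
    show DcLin k 1 = 0
    rw [h1, DcLin_single]
    simp [ee]
  leibniz' := by
    intro a b
    show DcLin k (a * b) = a • DcLin k b + b • DcLin k a
    induction a using AddMonoidAlgebra.induction_on with
    | of g =>
      induction b using AddMonoidAlgebra.induction_on with
      | of g' =>
        show DcLin k (Xm k g * Xm k g') = Xm k g • DcLin k (Xm k g') + Xm k g' • DcLin k (Xm k g)
        rw [Xm_mul, DcLin_Xm, DcLin_Xm, DcLin_Xm, ee_add]
      | add f₁ f₂ h₁ h₂ =>
        simp only [mul_add, map_add, h₁, h₂, smul_add, add_smul]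
        abel
      | smul c f hf =>
        rw [Algebra.mul_smul_comm, map_smul, map_smul, hf, smul_add, smul_comm c, smul_assoc]
    | add f₁ f₂ h₁ h₂ =>
      simp only [add_mul, map_add, h₁, h₂, smul_add, add_smul]
      abel
    | smul c f hf =>
      rw [Algebra.smul_mul_assoc, map_smul, map_smul, hf, smul_add, smul_assoc, smul_comm c b]

def θk : Ωk k →ₗ[Rk k] posIdeal k := (Dc k).liftKaehlerDifferential

set_option synthInstance.maxHeartbeats 1000000

abbrev Tk : Type := (posIdeal k) ⊗[Rk k] (Ωk k)

def dX (q : ℚ≥0) : Ωk k := KaehlerDifferential.D k (Rk k) (Xm k q)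

def vt (α β : ℚ≥0) : Tk k :=
  if h : 0 < α then XI k α h ⊗ₜ dX k β else (0 : (posIdeal k) ⊗[Rk k] (Ωk k))

lemma vt_pos {α : ℚ≥0} (h : 0 < α) (β : ℚ≥0) : vt k α β = XI k α h ⊗ₜ dX k β :=
  dif_pos h

lemma nsmul_pos' {s : ℚ≥0} (hs : 0 < s) {n : ℕ} (hn : 0 < n) : 0 < n • s := by
  rw [nsmul_eq_mul]; exact mul_pos (by exact_mod_cast hn) hs

lemma Xm_smul_XI (γ α : ℚ≥0) (h : 0 < α) :
    Xm k γ • XI k α h = XI k (γ + α) (lt_of_lt_of_le h le_add_self) := by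
  apply Subtype.ext
  show Xm k γ • Xm k α = Xm k (γ + α)
  rw [smul_eq_mul, Xm_mul]

lemma dX_nsmul (s : ℚ≥0) : ∀ n : ℕ, dX k ((n + 1) • s) = (n + 1) • (Xm k (n • s) • dX k s)
  | 0 => by rw [one_nsmul, zero_nsmul, Xm_zero, one_smul, one_nsmul]
  | (n + 1) => by
    have hidx1 : (n + 1) • s + s = (n + 2) • s := by
      simp only [nsmul_eq_mul]; push_cast; ring
    have hidx2 : s + n • s = (n + 1) • s := by
      simp only [nsmul_eq_mul]; push_cast; ring
    have hmul : Xm k ((n + 1) • s) * Xm k s = Xm k ((n + 2) • s) := by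
      rw [Xm_mul, hidx1]
    have hlb : dX k ((n + 2) • s)
        = Xm k ((n + 1) • s) • dX k s + Xm k s • dX k ((n + 1) • s) := by
      rw [dX, ← hmul]; exact Derivation.leibniz _ _ _
    show dX k ((n + 2) • s) = (n + 1 + 1) • (Xm k ((n + 1) • s) • dX k s)
    rw [hlb, dX_nsmul s n, smul_comm (Xm k s) (n + 1), smul_smul (Xm k s), Xm_mul, hidx2,
      succ_nsmul (Xm k ((n + 1) • s) • dX k s) (n + 1)]
    exact add_comm _ _

lemma vt_nsmul (α s : ℚ≥0) (h : 0 < α) (n : ℕ) :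
    vt k α ((n + 1) • s) = (n + 1) • vt k (n • s + α) s := by
  rw [vt_pos k h, vt_pos k (lt_of_lt_of_le h le_add_self), dX_nsmul, tmul_smul,
    TensorProduct.tmul_smul, TensorProduct.smul_tmul', Xm_smul_XI]

lemma Xm_smul_vt (γ α β : ℚ≥0) (h : 0 < α) :
    Xm k γ • vt k α β = vt k (γ + α) β := by
  rw [vt_pos k h, vt_pos k (lt_of_lt_of_le h le_add_self), TensorProduct.smul_tmul',
    Xm_smul_XI]

/-- `wk q = (1/q) • (2 • x^{q/2} ⊗ d x^{q/2})`, the candidate value of `dlog` at `x^q`. -/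
def wk (q : ℚ≥0) : Tk k :=
  if h : 0 < q then (((q : ℚ) : k))⁻¹ • (2 • vt k (q / 2) (q / 2)) else 0

lemma cast_ne_zero_of_pos {s : ℚ≥0} (hs : 0 < s) : (((s : ℚ) : k)) ≠ 0 := by
  have : (0 : ℚ) < (s : ℚ) := by exact_mod_cast hs
  exact Rat.cast_ne_zero.mpr this.ne'

lemma wk_eq (q : ℚ≥0) {s : ℚ≥0} (hs : 0 < s) {a : ℕ} (hq : q = (2 * (a + 1)) • s) :
    wk k q = (((s : ℚ) : k))⁻¹ • vt k ((2 * a + 1) • s) s := by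
  have hqpos : 0 < q := by rw [hq]; exact nsmul_pos' hs (by omega)
  have hhalf : q / 2 = (a + 1) • s := by
    rw [hq]; simp only [nsmul_eq_mul]; push_cast
    rw [div_eq_iff (two_ne_zero)]; ring
  have hidx : a • s + (a + 1) • s = (2 * a + 1) • s := by
    simp only [nsmul_eq_mul]; push_cast; ring
  have hcast : ((q : ℚ) : k) = ((2 * (a + 1) : ℕ) : k) * ((s : ℚ) : k) := by
    rw [hq]; simp only [nsmul_eq_mul]; push_cast; ring
  rw [wk, dif_pos hqpos, hhalf, vt_nsmul k _ s (nsmul_pos' hs (by omega)) a, hidx,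
    smul_smul 2 (a + 1), ← Nat.cast_smul_eq_nsmul k (2 * (a + 1)), smul_smul, hcast]
  congr 1
  have hn : ((2 * (a + 1) : ℕ) : k) ≠ 0 := Nat.cast_ne_zero.mpr (by omega)
  rw [mul_inv, mul_comm, ← mul_assoc, mul_inv_cancel₀ hn, one_mul]

lemma exists_decomp (q q' : ℚ≥0) :
    ∃ (s : ℚ≥0) (a b : ℕ), 0 < s ∧ q = (2 * a) • s ∧ q' = (2 * b) • s ∧ (0 < q → 0 < a) := by
  classical
  have hd : ((2 * q.den * q'.den : ℕ) : ℚ≥0) ≠ 0 := by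
    exact_mod_cast (Nat.pos_of_ne_zero (by simp [q.den_ne_zero, q'.den_ne_zero])).ne'
  refine ⟨(((2 * q.den * q'.den : ℕ) : ℚ≥0))⁻¹, q.num * q'.den, q'.num * q.den, ?_, ?_, ?_, ?_⟩
  · exact inv_pos.mpr (lt_of_le_of_ne zero_le (Ne.symm hd))
  · rw [nsmul_eq_mul, eq_comm, mul_inv_eq_iff_eq_mul₀ hd]
    push_cast
    calc (2 * (↑q.num * ↑q'.den) : ℚ≥0) = 2 * ↑q'.den * (↑q.num) := by ring
    _ = 2 * ↑q'.den * (q * ↑q.den) := by rw [NNRat.mul_den_eq_num]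
    _ = q * (2 * ↑q.den * ↑q'.den) := by ring
  · rw [nsmul_eq_mul, eq_comm, mul_inv_eq_iff_eq_mul₀ hd]
    push_cast
    calc (2 * (↑q'.num * ↑q.den) : ℚ≥0) = 2 * ↑q.den * (↑q'.num) := by ring
    _ = 2 * ↑q.den * (q' * ↑q'.den) := by rw [NNRat.mul_den_eq_num]
    _ = q' * (2 * ↑q.den * ↑q'.den) := by ring
  · intro hq
    have h1 : 0 < q.num := NNRat.num_pos.mpr hq
    have h2 : 0 < q'.den := Nat.pos_of_ne_zero q'.den_ne_zero
    positivity

lemma wk_add (q q' : ℚ≥0) (hq : 0 < q) : wk k (q + q') = Xm k q' • wk k q := by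
  obtain ⟨s, a, b, hs, hqd, hq'd, hap⟩ := exists_decomp q q'
  have ha := hap hq
  obtain ⟨a', rfl⟩ : ∃ a', a = a' + 1 := ⟨a - 1, by omega⟩
  have hsum : q + q' = (2 * ((a' + b) + 1)) • s := by
    rw [hqd, hq'd, ← add_nsmul]
    congr 1
    omega
  rw [wk_eq k q hs hqd, wk_eq k (q + q') hs hsum,
    smul_comm (Xm k q') ((((s : ℚ) : k))⁻¹),
    Xm_smul_vt k q' _ s (nsmul_pos' hs (by omega)), hq'd, ← add_nsmul]
  have hidx : (2 * b + (2 * a' + 1)) • s = (2 * (a' + b) + 1) • s := by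
    congr 1
    omega
  rw [hidx]

def Φ : Rk k →ₗ[k] Tk k :=
  (Finsupp.lsum k fun q => LinearMap.toSpanSingleton k _ (wk k q)) ∘ₗ
    (AddMonoidAlgebra.coeffLinearEquiv k).toLinearMap

lemma Φ_single (q : ℚ≥0) (c : k) :
    Φ k (AddMonoidAlgebra.single q c) = c • wk k q :=
  (Finsupp.lsum_single k (fun q => LinearMap.toSpanSingleton k _ (wk k q)) q c).trans
    (LinearMap.toSpanSingleton_apply k _ _ c)

lemma Φ_Xm (q : ℚ≥0) : Φ k (Xm k q) = wk k q := by
  rw [Xm, Φ_single, one_smul]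

lemma Φ_mul_Xm (q : ℚ≥0) (hq : 0 < q) (r : Rk k) :
    Φ k (r * Xm k q) = r • Φ k (Xm k q) := by
  induction r using AddMonoidAlgebra.induction_on with
  | of g =>
    show Φ k (Xm k g * Xm k q) = Xm k g • Φ k (Xm k q)
    rw [Xm_mul, Φ_Xm, Φ_Xm, add_comm, wk_add k q g hq]
  | add f g hf hg => rw [add_mul, map_add, hf, hg, add_smul]
  | smul c f hf => rw [smul_mul_assoc, map_smul, hf, smul_assoc]

lemma Φ_mul {f : Rk k} (hf : f ∈ posIdeal k) : ∀ r : Rk k, Φ k (r * f) = r • Φ k f := by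
  refine Submodule.span_induction
    (p := fun x _ => ∀ r : Rk k, Φ k (r * x) = r • Φ k x) ?_ ?_ ?_ ?_ hf
  · intro x hx r
    obtain ⟨q, hq, rfl⟩ := hx
    exact Φ_mul_Xm k q hq r
  · intro r; rw [mul_zero, map_zero, smul_zero]
  · intro x y _ _ hx hy r; rw [mul_add, map_add, map_add, hx r, hy r, smul_add]
  · intro c x _ hx r
    calc Φ k (r * (c • x)) = Φ k ((r * c) * x) := by rw [smul_eq_mul, mul_assoc]
    _ = (r * c) • Φ k x := hx (r * c)
    _ = r • (c • Φ k x) := mul_smul r c _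
    _ = r • Φ k (c • x) := by rw [← hx c, smul_eq_mul]

/-- The map `dlog : I → I ⊗ Ω`. -/
def φdlog : posIdeal k →ₗ[Rk k] Tk k where
  toFun f := Φ k f.1
  map_add' x y := by
    show Φ k ((x + y : posIdeal k) : Rk k) = Φ k x.1 + Φ k y.1
    rw [Submodule.coe_add, map_add]
  map_smul' r f := by
    show Φ k ((r • f : posIdeal k) : Rk k) = r • Φ k f.1
    rw [SetLike.val_smul, smul_eq_mul, Φ_mul k f.2 r]

lemma mu_vt (α β : ℚ≥0) (h : 0 < α) :
    muOmega k (vt k α β) = Xm k α • dX k β := by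
  rw [vt_pos k h, muOmega, TensorProduct.lift.tmul]
  rfl

lemma dX_def (q : ℚ≥0) : dX k q = KaehlerDifferential.D k (Rk k) (Xm k q) := rfl

lemma mu_wk (q : ℚ≥0) (hq : 0 < q) :
    muOmega k (wk k q) = (((q : ℚ) : k))⁻¹ • dX k q := by
  rw [wk, dif_pos hq, LinearMap.map_smul_of_tower, map_nsmul,
    mu_vt k _ _ (half_pos hq)]
  congr 1
  have hm : Xm k (q / 2) * Xm k (q / 2) = Xm k q := by rw [Xm_mul, add_halves]
  have hlb : dX k q = Xm k (q / 2) • dX k (q / 2) + Xm k (q / 2) • dX k (q / 2) := by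
    rw [dX_def, ← hm]; exact Derivation.leibniz _ _ _
  rw [two_nsmul, hlb]

lemma theta_mu_phi (x : Rk k) (hx : x ∈ posIdeal k) :
    ((θk k) (muOmega k (Φ k x)) : Rk k) = x := by
  refine Submodule.span_induction
    (p := fun x _ => ((θk k) (muOmega k (Φ k x)) : Rk k) = x) ?_ ?_ ?_ ?_ hx
  · intro y hy
    obtain ⟨q, hq, rfl⟩ := hy
    show ((θk k) (muOmega k (Φ k (Xm k q))) : Rk k) = Xm k q
    rw [Φ_Xm, mu_wk k q hq, LinearMap.map_smul_of_tower]
    have h1 : θk k (dX k q) = ee k q := by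
      rw [dX_def, θk]
      exact (Derivation.liftKaehlerDifferential_comp_D (Dc k) (Xm k q)).trans (DcLin_Xm k q)
    rw [h1, ee, dif_pos hq, smul_smul, inv_mul_cancel₀ (cast_ne_zero_of_pos k hq), one_smul]
    rfl
  · show ((θk k) (muOmega k (Φ k 0)) : Rk k) = 0
    rw [map_zero, map_zero, map_zero]; rfl
  · intro x y _ _ ihx ihy; rw [map_add, map_add, map_add, Submodule.coe_add, ihx, ihy]
  · intro c x hxmem ih
    rw [smul_eq_mul, Φ_mul k hxmem c, map_smul, map_smul, SetLike.val_smul, smul_eq_mul, ih]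

end Dlog

/-- Let `R = k[x^{ℚ≥0}]` over a field `k` of characteristic zero, with
`Ω¹ = Ω¹_{R/k}` and `I` the ideal spanned by `{x^q : q > 0}`.  The map
`d log x : I → I ⊗_R Ω¹`, defined on basis elements by `x^q ↦ (1/q)·d(x^q)` for `q > 0`
(the value being characterized by its image `(1/q)·d(x^q)` in `Ω¹` under the
multiplication map `I ⊗_R Ω¹ → Ω¹`), is a well-defined injective `R`-module
homomorphism. -/
theorem dlog_injective (k : Type) [Field k] [CharZero k] :
    ∃ φ : (posIdeal k) →ₗ[AddMonoidAlgebra k ℚ≥0]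
        (posIdeal k) ⊗[AddMonoidAlgebra k ℚ≥0]
          (KaehlerDifferential k (AddMonoidAlgebra k ℚ≥0)),
      Function.Injective φ ∧
      ∀ (q : ℚ≥0) (hq : 0 < q),
        muOmega k (φ ⟨AddMonoidAlgebra.single q (1 : k),
            Ideal.subset_span ⟨q, hq, rfl⟩⟩)
          = (((q : ℚ) : k))⁻¹ •
            (KaehlerDifferential.D k (AddMonoidAlgebra k ℚ≥0)
              (AddMonoidAlgebra.single q (1 : k))) := by
  refine ⟨φdlog k, ?_, ?_⟩
  · intro x y hxy
    apply Subtype.ext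
    have hx := theta_mu_phi k x.1 x.2
    have hy := theta_mu_phi k y.1 y.2
    rw [← hx, ← hy]
    exact congrArg (fun t => ((θk k) (muOmega k t) : AddMonoidAlgebra k ℚ≥0)) hxy
  · intro q hq
    show muOmega k (Φ k (AddMonoidAlgebra.single q (1 : k))) = _
    rw [show (AddMonoidAlgebra.single q (1 : k)) = Xm k q from rfl, Φ_Xm, mu_wk k q hq]
    rfl
end
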